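/- Let ρ be a positive semidefinite matrix on ℂ² ⊗ ℂ² with Tr₁ρ = Tr₂ρ = 𝟙/2. Then ρ is a finite convex combination of maximally entangled pure states: there exist finitely many weights p_j ≥ 0 with Σ_j p_j = 1 and 2×2 unitaries U_j such that ρ = Σ_j p_j (U_j ⊗ 𝟙)|I⟩⟨I|(U_j ⊗ 𝟙)†. (Equivalently, every doubly stochastic completely positive qubit map is a random unitary map.) -/

import Mathlib

open scoped BigOperators Matrix Kronecker ComplexOrder

noncomputable section

/-- Partial trace over the first tensor factor. -/
def ptrace1 (d : ℕ) (ρ : Matrix (Fin d × Fin d) (Fin d × Fin d) ℂ) :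
    Matrix (Fin d) (Fin d) ℂ :=
  Matrix.of fun j l => ∑ i, ρ (i, j) (i, l)

/-- Partial trace over the second tensor factor. -/
def ptrace2 (d : ℕ) (ρ : Matrix (Fin d × Fin d) (Fin d × Fin d) ℂ) :
    Matrix (Fin d) (Fin d) ℂ :=
  Matrix.of fun i k => ∑ j, ρ (i, j) (k, j)

/-- The rank-one projector |ψ⟩⟨ψ|. -/
def outer {n : Type*} [Fintype n] (ψ : n → ℂ) : Matrix n n ℂ :=
  Matrix.of fun p q => ψ p * star (ψ q)

/-- The maximally entangled unit vector |I⟩. -/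
def maxEnt (d : ℕ) : Fin d × Fin d → ℂ :=
  fun p => if p.1 = p.2 then (↑(Real.sqrt d))⁻¹ else 0

/-!
The vectors `vec q = ∑ q i j |i⟩|j⟩` for `q` in the real basis `1, iσ_z, iσ_x, iσ_y` of the
quaternions `ℝ · SU(2) ⊆ M₂(ℂ)` form (up to a factor `√2`) the magic basis `B` of `ℂ² ⊗ ℂ²`.
When both marginals of `ρ` are scalar, `Bᴴ ρ B` is a real symmetric positive semidefinite matrix,
so its spectral decomposition `∑ μⱼ vⱼ vⱼᵀ` has real unit eigenvectors `vⱼ`. Then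
`B vⱼ = vec (q vⱼ)` with `q v = ∑ vₖ qₖ` a unitary quaternion, and since
`(U ⊗ 1)|I⟩ = vec U / √2`, undoing the change of basis gives
`ρ = ∑ (μⱼ / 2) (q vⱼ ⊗ 1)|I⟩⟨I|(q vⱼ ⊗ 1)†`, with `∑ μⱼ = tr (Bᴴ ρ B) = 2 tr ρ = 2`.
-/

open Complex Matrix

lemma Matrix.IsHermitian.eq_sum_eigenvalues_smul_vecMulVec {𝕜 n : Type*} [RCLike 𝕜] [Fintype n]
    [DecidableEq n] {A : Matrix n n 𝕜} (hA : A.IsHermitian) :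
    A = ∑ j, (hA.eigenvalues j : 𝕜) •
      vecMulVec ⇑(hA.eigenvectorBasis j) (star ⇑(hA.eigenvectorBasis j)) := by
  conv_lhs => rw [hA.spectral_theorem]
  ext i k
  simp only [Unitary.conjStarAlgAut_apply, mul_apply, eigenvectorUnitary_apply, diagonal_apply,
    Function.comp_apply, mul_ite, mul_zero, Finset.sum_ite_eq', Finset.mem_univ, ↓reduceIte,
    star_apply, RCLike.star_def, Matrix.sum_apply, Matrix.smul_apply, vecMulVec_apply,
    Pi.star_apply]
  exact Finset.sum_congr rfl fun j _ => by rw [smul_eq_mul]; ring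

lemma Matrix.IsHermitian.dotProduct_eigenvectorBasis_self {𝕜 n : Type*} [RCLike 𝕜] [Fintype n]
    [DecidableEq n] {A : Matrix n n 𝕜} (hA : A.IsHermitian) (j : n) :
    ⇑(hA.eigenvectorBasis j) ⬝ᵥ star ⇑(hA.eigenvectorBasis j) = 1 := by
  rw [← EuclideanSpace.inner_eq_star_dotProduct, inner_self_eq_norm_sq_to_K,
    hA.eigenvectorBasis.orthonormal.1 j]
  simp

lemma Matrix.IsHermitian.map_re_map_ofReal {n : Type*} {N : Matrix n n ℂ} (hN : N.IsHermitian)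
    (hT : Nᵀ = N) : (N.map re).map ofReal = N := by
  ext i j
  have h := congr_fun₂ hN j i
  rw [← congr_fun₂ hT j i] at h
  exact Complex.conj_eq_iff_re.mp h

lemma Matrix.PosSemidef.of_map_ofReal {n : Type*} [Fintype n] {R : Matrix n n ℝ}
    (h : (R.map ofReal).PosSemidef) : R.PosSemidef := by
  refine .of_dotProduct_mulVec_nonneg ?_ fun x => ?_
  · ext i j
    simpa using congr_fun₂ h.isHermitian i j
  · have hcast : star (fun i => (x i : ℂ)) ⬝ᵥ (R.map ofReal *ᵥ fun i => (x i : ℂ)) =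
        ((star x ⬝ᵥ R *ᵥ x : ℝ) : ℂ) := by
      simp [dotProduct, mulVec]
    exact_mod_cast hcast ▸ h.dotProduct_mulVec_nonneg _

lemma outer_eq_vecMulVec {n : Type*} [Fintype n] (ψ : n → ℂ) : outer ψ = vecMulVec ψ (star ψ) :=
  rfl

lemma mul_outer_mul_conjTranspose {m n : Type*} [Fintype m] [Fintype n] (M : Matrix m n ℂ)
    (ψ : n → ℂ) : M * outer ψ * Mᴴ = outer (M *ᵥ ψ) := by
  rw [outer_eq_vecMulVec, outer_eq_vecMulVec, mul_vecMulVec, vecMulVec_mul, star_mulVec]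

lemma outer_smul {n : Type*} [Fintype n] (c : ℂ) (ψ : n → ℂ) :
    outer (c • ψ) = (c * star c) • outer ψ := by
  ext p q
  simp only [outer, of_apply, Pi.smul_apply, Matrix.smul_apply, smul_eq_mul, star_mul']
  ring

lemma kronecker_one_mulVec_maxEnt (d : ℕ) (A : Matrix (Fin d) (Fin d) ℂ) :
    (A ⊗ₖ (1 : Matrix (Fin d) (Fin d) ℂ)) *ᵥ maxEnt d =
      ((Real.sqrt d : ℂ))⁻¹ • fun p => A p.1 p.2 := by
  ext ⟨i, j⟩
  simp [mulVec, dotProduct, maxEnt, Fintype.sum_prod_type, one_apply, mul_comm]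

lemma kronecker_one_mul_outer_maxEnt_mul_conjTranspose (d : ℕ) (A : Matrix (Fin d) (Fin d) ℂ) :
    (A ⊗ₖ (1 : Matrix (Fin d) (Fin d) ℂ)) * outer (maxEnt d) * (A ⊗ₖ 1)ᴴ =
      (d : ℂ)⁻¹ • outer fun p => A p.1 p.2 := by
  rw [mul_outer_mul_conjTranspose, kronecker_one_mulVec_maxEnt, outer_smul]
  congr 1
  rw [star_inv₀, Complex.star_def, Complex.conj_ofReal, ← mul_inv, ← Complex.ofReal_mul,
    Real.mul_self_sqrt (Nat.cast_nonneg d), Complex.ofReal_natCast]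

lemma trace_ptrace1 (d : ℕ) (ρ : Matrix (Fin d × Fin d) (Fin d × Fin d) ℂ) :
    (ptrace1 d ρ).trace = ρ.trace := by
  simp only [trace, ptrace1, diag_apply, of_apply, Fintype.sum_prod_type]
  exact Finset.sum_comm

def quaternionBasis : Fin 4 → Matrix (Fin 2) (Fin 2) ℂ :=
  ![1, !![I, 0; 0, -I], !![0, I; I, 0], !![0, 1; -1, 0]]

def quaternionMatrix (v : Fin 4 → ℝ) : Matrix (Fin 2) (Fin 2) ℂ :=
  ∑ k, (v k : ℂ) • quaternionBasis k

def magicBasis : Matrix (Fin 2 × Fin 2) (Fin 4) ℂ := of fun p k => quaternionBasis k p.1 p.2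

lemma quaternionMatrix_mul_conjTranspose (v : Fin 4 → ℝ) :
    quaternionMatrix v * (quaternionMatrix v)ᴴ = ((v ⬝ᵥ v : ℝ) : ℂ) • 1 := by
  ext i j
  fin_cases i <;> fin_cases j <;>
    simp [quaternionMatrix, quaternionBasis, Fin.sum_univ_four, mul_apply, dotProduct,
      Fin.sum_univ_two] <;>
    grind [Complex.I_sq]

lemma quaternionMatrix_mem_unitaryGroup {v : Fin 4 → ℝ} (hv : v ⬝ᵥ v = 1) :
    quaternionMatrix v ∈ unitaryGroup (Fin 2) ℂ := by
  rw [mem_unitaryGroup_iff, star_eq_conjTranspose, quaternionMatrix_mul_conjTranspose, hv]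
  simp

lemma magicBasis_mulVec_ofReal (v : Fin 4 → ℝ) :
    magicBasis *ᵥ (fun k => (v k : ℂ)) = fun p => quaternionMatrix v p.1 p.2 := by
  ext p
  simp [magicBasis, quaternionMatrix, mulVec, dotProduct, Matrix.sum_apply, mul_comm]

lemma magicBasis_mul_conjTranspose : magicBasis * magicBasisᴴ = (2 : ℂ) • 1 := by
  ext ⟨i, j⟩ ⟨k, l⟩
  fin_cases i <;> fin_cases j <;> fin_cases k <;> fin_cases l <;>
    simp [magicBasis, quaternionBasis, mul_apply, Fin.sum_univ_four] <;> norm_num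

lemma trace_conjTranspose_magicBasis_mul_mul (ρ : Matrix (Fin 2 × Fin 2) (Fin 2 × Fin 2) ℂ) :
    (magicBasisᴴ * ρ * magicBasis).trace = 2 * ρ.trace := by
  rw [trace_mul_comm, ← Matrix.mul_assoc, magicBasis_mul_conjTranspose, smul_mul, Matrix.one_mul,
    trace_smul, smul_eq_mul]

/- The spin flip `(σ_y ⊗ σ_y) ρᵀ (σ_y ⊗ σ_y) = tr ρ - ρ_A ⊗ 1 - 1 ⊗ ρ_B + ρ` fixes `ρ` when both
marginals are `c • 1`, and conjugation by the magic basis turns the spin flip into transposition. -/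
lemma transpose_conjTranspose_magicBasis_mul_mul (ρ : Matrix (Fin 2 × Fin 2) (Fin 2 × Fin 2) ℂ)
    (c : ℂ) (h1 : ptrace1 2 ρ = c • 1) (h2 : ptrace2 2 ρ = c • 1) :
    (magicBasisᴴ * ρ * magicBasis)ᵀ = magicBasisᴴ * ρ * magicBasis := by
  have e1 := congr_fun₂ h1
  have e2 := congr_fun₂ h2
  simp only [Fin.forall_fin_two, ptrace1, ptrace2, of_apply, Fin.sum_univ_two, Matrix.smul_apply,
    one_apply, ↓reduceIte, smul_eq_mul, mul_one, mul_zero, zero_ne_one, one_ne_zero] at e1 e2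
  ext k l
  fin_cases k <;> fin_cases l <;>
    simp [magicBasis, quaternionBasis, mul_apply, Fintype.sum_prod_type, Fin.sum_univ_two] <;>
    grind [Complex.I_sq]

lemma magicBasis_mul_map_ofReal_vecMulVec_mul (v : Fin 4 → ℝ) :
    magicBasis * (vecMulVec v v).map ofReal * magicBasisᴴ =
      (2 : ℂ) • ((quaternionMatrix v ⊗ₖ (1 : Matrix (Fin 2) (Fin 2) ℂ)) * outer (maxEnt 2) *
        (quaternionMatrix v ⊗ₖ (1 : Matrix (Fin 2) (Fin 2) ℂ))ᴴ) := by
  have hv : (vecMulVec v v).map ofReal = outer fun k => (v k : ℂ) := by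
    ext k l
    simp [outer, vecMulVec_apply]
  rw [hv, mul_outer_mul_conjTranspose, magicBasis_mulVec_ofReal,
    kronecker_one_mul_outer_maxEnt_mul_conjTranspose, smul_smul]
  norm_num

lemma eq_sum_of_conjTranspose_magicBasis_mul_mul_eq
    (ρ : Matrix (Fin 2 × Fin 2) (Fin 2 × Fin 2) ℂ) {R : Matrix (Fin 4) (Fin 4) ℝ}
    (hR : R.IsHermitian) (h : magicBasisᴴ * ρ * magicBasis = R.map ofReal) :
    ρ = ∑ j, ((hR.eigenvalues j / 2 : ℝ) : ℂ) •
      ((quaternionMatrix (hR.eigenvectorBasis j) ⊗ₖ (1 : Matrix (Fin 2) (Fin 2) ℂ)) *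
        outer (maxEnt 2) *
        (quaternionMatrix (hR.eigenvectorBasis j) ⊗ₖ (1 : Matrix (Fin 2) (Fin 2) ℂ))ᴴ) := by
  have hρ : ρ = (4 : ℂ)⁻¹ • (magicBasis * R.map ofReal * magicBasisᴴ) := by
    rw [← h, show magicBasis * (magicBasisᴴ * ρ * magicBasis) * magicBasisᴴ =
      (magicBasis * magicBasisᴴ) * ρ * (magicBasis * magicBasisᴴ) by simp only [Matrix.mul_assoc],
      magicBasis_mul_conjTranspose]
    simp only [Matrix.smul_mul, Matrix.mul_smul, Matrix.one_mul, Matrix.mul_one, smul_smul]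
    norm_num
  have hRmap : R.map ofReal = ∑ j, (hR.eigenvalues j : ℂ) •
      (vecMulVec ⇑(hR.eigenvectorBasis j) ⇑(hR.eigenvectorBasis j)).map ofReal := by
    conv_lhs => rw [hR.eq_sum_eigenvalues_smul_vecMulVec]
    ext k l
    simp [Matrix.sum_apply]
  rw [hρ, hRmap, Matrix.mul_sum, Matrix.sum_mul, Finset.smul_sum]
  refine Finset.sum_congr rfl fun j _ => ?_
  rw [Matrix.mul_smul, Matrix.smul_mul, magicBasis_mul_map_ofReal_vecMulVec_mul, smul_smul,
    smul_smul]
  push_cast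
  ring_nf

/-- Landau–Streater / Kümmerer–Maassen for qubits: every two-qubit state with both partial
traces maximally mixed is a finite convex combination of maximally entangled pure states. -/
theorem doubly_stochastic_qubit_state_mixture_of_maximally_entangled
    (ρ : Matrix (Fin 2 × Fin 2) (Fin 2 × Fin 2) ℂ) (hρ : ρ.PosSemidef)
    (h1 : ptrace1 2 ρ = (2 : ℂ)⁻¹ • 1) (h2 : ptrace2 2 ρ = (2 : ℂ)⁻¹ • 1) :
    ∃ (n : ℕ) (p : Fin n → ℝ) (U : Fin n → Matrix (Fin 2) (Fin 2) ℂ),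
      (∀ j, 0 ≤ p j) ∧ (∑ j, p j = 1) ∧
      (∀ j, U j ∈ Matrix.unitaryGroup (Fin 2) ℂ) ∧
      ρ = ∑ j, (p j : ℂ) •
        ((U j ⊗ₖ (1 : Matrix (Fin 2) (Fin 2) ℂ)) * outer (maxEnt 2) *
          (U j ⊗ₖ (1 : Matrix (Fin 2) (Fin 2) ℂ))ᴴ) := by
  set N := magicBasisᴴ * ρ * magicBasis with hN
  have hNpos : N.PosSemidef := hρ.conjTranspose_mul_mul_same magicBasis
  have hNreal : (N.map re).map ofReal = N :=
    Matrix.IsHermitian.map_re_map_ofReal hNpos.isHermitian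
      (transpose_conjTranspose_magicBasis_mul_mul ρ _ h1 h2)
  have hR : (N.map re).PosSemidef := .of_map_ofReal (hNreal ▸ hNpos)
  have htrace : (N.map re).trace = 2 := by
    have hNtrace : N.trace = 2 := by
      rw [hN, trace_conjTranspose_magicBasis_mul_mul, ← trace_ptrace1, h1]
      simp
    rw [show (N.map re).trace = N.trace.re by simp [trace, Complex.re_sum], hNtrace]
    norm_num
  refine ⟨4, fun j => hR.1.eigenvalues j / 2, fun j => quaternionMatrix (hR.1.eigenvectorBasis j),
    fun j => div_nonneg (hR.eigenvalues_nonneg j) zero_le_two, ?_,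
    fun j => quaternionMatrix_mem_unitaryGroup
      (by simpa using Matrix.IsHermitian.dotProduct_eigenvectorBasis_self hR.1 j),
    eq_sum_of_conjTranspose_magicBasis_mul_mul_eq ρ hR.1 hNreal.symm⟩
  have hsum := Matrix.IsHermitian.trace_eq_sum_eigenvalues hR.1
  simp only [RCLike.ofReal_real_eq_id, id] at hsum
  rw [← Finset.sum_div, ← hsum, htrace]
  norm_num
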